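/- For constants a, b > 0, the Piterbarg-type constant P_{2,a}^{bt²}[0,∞) := lim_{S→∞} E[ sup_{t ∈ [0,S]} exp(√(2a) B_2(t) − a t² − b t²) ] equals (1/2)(1 + √(1 + a/b)), where B_2(t) = t·N is the degenerate fBm with Hurst index 1 and N a standard normal random variable. -/

import Mathlib

/-!
For fixed `x`, the exponent `√(2a) t x − (a + b) t²` is a concave quadratic in `t`, so the supremum
over `[0, S]` is attained at the projection of the vertex `√(2a) x / (2(a + b))` onto `[0, S]`. Once
`S` passes the vertex the supremum equals `exp(l · max(x, 0)²)` with `l = a / (2(a + b)) < 1/2`, and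
it is dominated by that function for every `S ≥ 0`. Dominated convergence therefore reduces the
limit to the Gaussian integral `E[exp(l · max(N, 0)²)]`, which splits at `0` into two half-Gaussian
integrals: `1/2` from the negative half-line and `1 / (2√(1 − 2l)) = √(1 + a/b) / 2` from the
positive one.
-/

open MeasureTheory Filter ProbabilityTheory
open Real Set Topology

lemma abs_projIcc_sub_le {a b : ℝ} (h : a ≤ b) (x : ℝ) {t : ℝ} (ht : t ∈ Icc a b) :
    |(projIcc a b h x : ℝ) - x| ≤ |t - x| := by
  rw [coe_projIcc]
  rcases le_total x a with hxa | hax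
  · rw [min_eq_right (hxa.trans h), max_eq_left hxa, abs_of_nonneg (by linarith),
      abs_of_nonneg (by linarith [ht.1])]
    linarith [ht.1]
  · rcases le_total x b with hxb | hbx
    · simp [min_eq_right hxb, max_eq_right hax]
    · rw [min_eq_left hbx, max_eq_right h, abs_of_nonpos (by linarith),
        abs_of_nonpos (by linarith [ht.2])]
      linarith [ht.2]

lemma mul_sub_mul_sq_le_of_abs_sub_le {p d : ℝ} (hd : 0 < d) {t u : ℝ}
    (h : |u - p / (2 * d)| ≤ |t - p / (2 * d)|) : p * t - d * t ^ 2 ≤ p * u - d * u ^ 2 := by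
  have complete_square (s : ℝ) :
      p * s - d * s ^ 2 = p ^ 2 / (4 * d) - d * (s - p / (2 * d)) ^ 2 := by
    field_simp
    ring
  rw [complete_square, complete_square]
  nlinarith [sq_le_sq.mpr h]

lemma mul_sub_mul_sq_le_max_sq_div {p d τ : ℝ} (hd : 0 < d) (hτ : 0 ≤ τ) :
    p * τ - d * τ ^ 2 ≤ max p 0 ^ 2 / (4 * d) := by
  rcases le_total p 0 with hp | hp
  · rw [max_eq_right hp, zero_pow two_ne_zero, zero_div]
    nlinarith [mul_nonpos_of_nonpos_of_nonneg hp hτ]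
  · rw [max_eq_left hp, le_div_iff₀ (by positivity)]
    nlinarith [sq_nonneg (2 * d * τ - p)]

lemma iSup_Icc_exp_quadratic (p : ℝ) {d S : ℝ} (hd : 0 < d) (hS : 0 ≤ S) :
    ⨆ t : Icc (0 : ℝ) S, exp (p * t - d * t ^ 2)
      = exp (p * projIcc 0 S hS (p / (2 * d)) - d * (projIcc 0 S hS (p / (2 * d)) : ℝ) ^ 2) := by
  refine IsGreatest.csSup_eq ⟨⟨_, rfl⟩, ?_⟩
  rintro _ ⟨t, rfl⟩
  exact exp_le_exp.mpr (mul_sub_mul_sq_le_of_abs_sub_le hd (abs_projIcc_sub_le hS _ t.2))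

lemma iSup_Icc_exp_quadratic_eventually_eq (p : ℝ) {d : ℝ} (hd : 0 < d) :
    ∀ᶠ S in atTop, ⨆ t : Icc (0 : ℝ) S, exp (p * t - d * t ^ 2) = exp (max p 0 ^ 2 / (4 * d)) := by
  filter_upwards [eventually_ge_atTop (max (p / (2 * d)) 0)] with S hS
  rw [iSup_Icc_exp_quadratic p hd ((le_max_right _ _).trans hS), coe_projIcc,
    min_eq_right ((le_max_left _ _).trans hS)]
  congr 1
  rcases le_total p 0 with hp | hp
  · rw [max_eq_left (div_nonpos_of_nonpos_of_nonneg hp (by positivity)), max_eq_right hp]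
    ring
  · rw [max_eq_right (by positivity), max_eq_left hp]
    field_simp
    ring

theorem tendsto_integral_iSup_Icc_exp_quadratic {Ω : Type*} [MeasurableSpace Ω] {μ : Measure Ω}
    {X : Ω → ℝ} (hX : AEMeasurable X μ) {d : ℝ} (hd : 0 < d)
    (hint : Integrable (fun ω => exp (max (X ω) 0 ^ 2 / (4 * d))) μ) :
    Tendsto (fun S => ∫ ω, ⨆ t : Icc (0 : ℝ) S, exp (X ω * t - d * t ^ 2) ∂μ) atTop
      (𝓝 (∫ ω, exp (max (X ω) 0 ^ 2 / (4 * d)) ∂μ)) := by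
  refine tendsto_integral_filter_of_dominated_convergence _ ?_ ?_ hint
    (ae_of_all _ fun ω => tendsto_const_nhds.congr'
      ((iSup_Icc_exp_quadratic_eventually_eq (X ω) hd).mono fun _ => Eq.symm))
  · filter_upwards [eventually_ge_atTop 0] with S hS
    simp_rw [iSup_Icc_exp_quadratic _ hd hS]
    have hcont : Continuous fun p : ℝ =>
        exp (p * projIcc 0 S hS (p / (2 * d)) - d * (projIcc 0 S hS (p / (2 * d)) : ℝ) ^ 2) := by
      fun_prop
    exact (hcont.measurable.comp_aemeasurable hX).aestronglyMeasurable
  · filter_upwards [eventually_ge_atTop 0] with S hS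
    refine ae_of_all _ fun ω => ?_
    rw [iSup_Icc_exp_quadratic _ hd hS, norm_of_nonneg (exp_pos _).le]
    exact exp_le_exp.mpr (mul_sub_mul_sq_le_max_sq_div hd (projIcc 0 S hS _).2.1)

lemma gaussianPDFReal_mul_exp_mul_sq (l x : ℝ) :
    gaussianPDFReal 0 1 x * exp (l * x ^ 2) = (√(2 * π))⁻¹ * exp (-(1 / 2 - l) * x ^ 2) := by
  simp only [gaussianPDFReal, NNReal.coe_one, mul_one, sub_zero]
  rw [mul_assoc, ← exp_add]
  congr 2
  ring

lemma integrable_gaussianPDFReal_mul_exp_mul_sq {l : ℝ} (hl : l < 1 / 2) :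
    Integrable fun x => gaussianPDFReal 0 1 x * exp (l * x ^ 2) := by
  simp_rw [gaussianPDFReal_mul_exp_mul_sq]
  exact (integrable_exp_neg_mul_sq (by linarith)).const_mul _

lemma integral_Ioi_gaussianPDFReal_mul_exp_mul_sq {l : ℝ} (hl : l < 1 / 2) :
    ∫ x in Ioi 0, gaussianPDFReal 0 1 x * exp (l * x ^ 2) = 1 / (2 * √(1 - 2 * l)) := by
  simp_rw [gaussianPDFReal_mul_exp_mul_sq, integral_const_mul, integral_gaussian_Ioi]
  have hsqrt_pos : 0 < √(1 - 2 * l) := sqrt_pos.mpr (by linarith)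
  rw [show π / (1 / 2 - l) = 2 * π / (1 - 2 * l) by field_simp, sqrt_div (by positivity)]
  field_simp

lemma integral_Iic_gaussianPDFReal : ∫ x in Iic 0, gaussianPDFReal 0 1 x = 1 / 2 := by
  rw [show Iic (0 : ℝ) = Iic (-0) by rw [neg_zero], ← integral_comp_neg_Ioi]
  have h := integral_Ioi_gaussianPDFReal_mul_exp_mul_sq (l := 0) (by norm_num)
  simp only [zero_mul, exp_zero, mul_one, mul_zero, sub_zero, sqrt_one] at h
  rw [← h]
  congr 1 with x
  simp only [gaussianPDFReal, sub_zero, neg_sq]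

lemma integral_exp_mul_max_sq_gaussianReal {l : ℝ} (hl : l < 1 / 2) :
    ∫ x, exp (l * max x 0 ^ 2) ∂gaussianReal 0 1 = 1 / 2 + 1 / (2 * √(1 - 2 * l)) := by
  set f := fun x => gaussianPDFReal 0 1 x * exp (l * max x 0 ^ 2)
  have hf_Iic : EqOn f (gaussianPDFReal 0 1) (Iic 0) := fun x hx => by
    simp [f, max_eq_right (show x ≤ 0 from hx)]
  have hf_Ioi : EqOn f (fun x => gaussianPDFReal 0 1 x * exp (l * x ^ 2)) (Ioi 0) :=
    fun x hx => by simp [f, max_eq_left (show 0 < x from hx).le]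
  rw [integral_gaussianReal_eq_integral_smul one_ne_zero]
  simp_rw [smul_eq_mul]
  rw [← intervalIntegral.integral_Iic_add_Ioi
      ((integrable_gaussianPDFReal 0 1).integrableOn.congr_fun hf_Iic.symm measurableSet_Iic)
      ((integrable_gaussianPDFReal_mul_exp_mul_sq hl).integrableOn.congr_fun hf_Ioi.symm
        measurableSet_Ioi),
    setIntegral_congr_fun measurableSet_Iic hf_Iic, setIntegral_congr_fun measurableSet_Ioi hf_Ioi,
    integral_Iic_gaussianPDFReal, integral_Ioi_gaussianPDFReal_mul_exp_mul_sq hl]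

lemma integrable_exp_mul_max_sq_gaussianReal {l : ℝ} (hl : l < 1 / 2) :
    Integrable (fun x => exp (l * max x 0 ^ 2)) (gaussianReal 0 1) := by
  refine Integrable.of_integral_ne_zero ?_
  rw [integral_exp_mul_max_sq_gaussianReal hl]
  positivity

theorem piterbarg_constant_alpha_two_general
    {Ω : Type*} [MeasurableSpace Ω] (P : Measure Ω)
    (N : Ω → ℝ) (hmeas : Measurable N)
    (hlaw : Measure.map N P = gaussianReal 0 1)
    (a b : ℝ) (ha : 0 < a) (hb : 0 < b) :
    Tendsto (fun S : ℝ =>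
        ∫ ω, (⨆ t : Set.Icc (0 : ℝ) S,
          Real.exp (Real.sqrt (2 * a) * t * N ω - a * t ^ 2 - b * t ^ 2)) ∂P)
      atTop (nhds (1 / 2 * (1 + Real.sqrt (1 + a / b)))) := by
  have hd : 0 < a + b := by positivity
  set l := a / (2 * (a + b))
  have hl : l < 1 / 2 := by rw [div_lt_iff₀ (by positivity)]; linarith
  have hexponent (x : ℝ) : max (√(2 * a) * x) 0 ^ 2 / (4 * (a + b)) = l * max x 0 ^ 2 := by
    have hmax : max (√(2 * a) * x) 0 = √(2 * a) * max x 0 := by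
      rw [mul_max_of_nonneg _ _ (sqrt_nonneg _), mul_zero]
    rw [hmax, mul_pow, sq_sqrt (by positivity)]
    simp only [l]
    field_simp
    ring
  have hconst : 1 / 2 * (1 + √(1 + a / b)) = 1 / 2 + 1 / (2 * √(1 - 2 * l)) := by
    have h : 1 - 2 * l = (1 + a / b)⁻¹ := by simp only [l]; field_simp; ring
    rw [h, sqrt_inv]
    field_simp
  have hint := integrable_exp_mul_max_sq_gaussianReal hl
  rw [← hlaw, integrable_map_measure (by fun_prop) hmeas.aemeasurable] at hint
  rw [hconst, ← integral_exp_mul_max_sq_gaussianReal hl, ← hlaw,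
    integral_map hmeas.aemeasurable (by fun_prop)]
  have hlimit := tendsto_integral_iSup_Icc_exp_quadratic (hmeas.const_mul √(2 * a)).aemeasurable
    hd (by simpa only [hexponent, Function.comp_def] using hint)
  simp only [hexponent] at hlimit
  convert hlimit using 7
  ring

/-- for `B₂(t) = t·N` with `N` standard normal and `a, b > 0`,
`lim_{S→∞} E[ sup_{t∈[0,S]} exp(√(2a) t N − a t² − b t²) ] = (1/2)(1 + √(1 + a/b))`. -/
theorem piterbarg_constant_alpha_two
    {Ω : Type*} [MeasurableSpace Ω] (P : Measure Ω) [IsProbabilityMeasure P]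
    (N : Ω → ℝ) (hmeas : Measurable N)
    (hlaw : Measure.map N P = gaussianReal 0 1)
    (a b : ℝ) (ha : 0 < a) (hb : 0 < b) :
    Tendsto (fun S : ℝ =>
        ∫ ω, (⨆ t : Set.Icc (0 : ℝ) S,
          Real.exp (Real.sqrt (2 * a) * t * N ω - a * t ^ 2 - b * t ^ 2)) ∂P)
      atTop (nhds (1 / 2 * (1 + Real.sqrt (1 + a / b)))) :=
  piterbarg_constant_alpha_two_general P N hmeas hlaw a b ha hb
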